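/- arXiv:1206.6019 — 3 statements merged into one kernel-verified Lean document; each statement's English description precedes it below -/
import Mathlib

section
/- Let X be a smooth complex projective Calabi-Yau variety of dimension d ≥ 2, let E be a spherical object of D(X), and let G be an object of D(X) with Φ_E(G) ≅ G[−d]. Then d_E(G) = Σ_i dim Hom(E, G[i]) is an even integer; in particular d_E(G) ≠ 1. -/
/-!
This file formalizes a statement from "Commuting reflection functors and
orthogonal spherical objects".  Mathlib does not have bounded derived categories
of coherent sheaves on smooth projective varieties, so the geometric setting is
axiomatized: `T` plays the role of the bounded derived category `D(X)` of a
smooth complex projective variety `X` — a ℂ-linear triangulated category with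
finite-dimensional, bounded graded Hom's — and the Calabi-Yau condition is
expressed by Serre duality in the form of a perfect trace pairing
`Hom(A,B) × Hom(B,A⟦d⟧) → ℂ`.
-/

open CategoryTheory Limits Pretriangulated Module

universe v u

namespace SphericalPaper

variable (T : Type u) [Category.{v} T] [Preadditive T] [Linear ℂ T]
  [HasZeroObject T] [HasShift T ℤ] [∀ n : ℤ, (shiftFunctor T n).Additive]
  [Pretriangulated T] [HasFiniteBiproducts T]

/-- Hom-finiteness and boundedness of the graded Hom's, as holds in the bounded
derived category of coherent sheaves on a smooth complex projective variety. -/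
class HomFiniteBounded : Prop where
  finite : ∀ A B : T, FiniteDimensional ℂ (A ⟶ B)
  bounded : ∀ A B : T, ∃ N : ℕ, ∀ i : ℤ, (N : ℤ) < |i| → ∀ f : A ⟶ B⟦i⟧, f = 0

/-- The Calabi-Yau condition in dimension `d`: the `d`-th shift is a Serre
functor, expressed by trace functionals inducing a perfect pairing
`Hom(A,B) × Hom(B,A⟦d⟧) → ℂ` (Serre duality `Hom(A,B) ≅ Hom(B,A⟦d⟧)^*`). -/
class CalabiYau (d : ℤ) : Type (max u v) where
  tr : ∀ A : T, (A ⟶ A⟦d⟧) →ₗ[ℂ] ℂ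
  nondegen_left : ∀ (A B : T) (f : A ⟶ B),
    (∀ g : B ⟶ A⟦d⟧, tr A (f ≫ g) = 0) → f = 0
  nondegen_right : ∀ (A B : T) (g : B ⟶ A⟦d⟧),
    (∀ f : A ⟶ B, tr A (f ≫ g) = 0) → g = 0

variable {T}

/-- An object `E` is spherical (for dimension `d`) if `Hom(E,E⟦i⟧)` is
one-dimensional for `i = 0` and `i = d` and vanishes for all other `i`. -/
def IsSpherical (d : ℤ) (E : T) : Prop :=
  finrank ℂ (E ⟶ E⟦(0 : ℤ)⟧) = 1 ∧ finrank ℂ (E ⟶ E⟦d⟧) = 1 ∧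
    ∀ i : ℤ, i ≠ 0 → i ≠ d → ∀ f : E ⟶ E⟦i⟧, f = 0

/-- The spherical twist `Φ_E` attached to a spherical object `E`, presented by
its defining natural distinguished triangle
`Φ_E(G) → RHom(E,G) ⊗_ℂ E → G → Φ_E(G)[1]` :
`Φ` is a triangulated autoequivalence, `Ψ` is the functor `G ↦ RHom(E,G) ⊗_ℂ E`
(each `Ψ(G)` is exhibited as a finite biproduct of shifts `E⟦-i⟧` indexed by
bases of the spaces `Hom(E,G⟦i⟧)`, the natural map `Ψ(G) → G` restricting to
evaluation of the corresponding basis vectors, i.e. it is the evaluation map,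
which is the Fourier-Mukai description of the twist along the spherical
object). -/
structure SphericalTwist (E : T) where
  Φ : T ⥤ T
  equiv : Φ.IsEquivalence
  commShift : Φ.CommShift ℤ
  triangulated : letI := commShift; Φ.IsTriangulated
  Ψ : T ⥤ T
  α : Φ ⟶ Ψ
  ε : Ψ ⟶ 𝟭 T
  δ : 𝟭 T ⟶ Φ ⋙ shiftFunctor T (1 : ℤ)
  dist : ∀ G : T, Triangle.mk (α.app G) (ε.app G) (δ.app G) ∈ distTriang T
  m : T → ℕ
  deg : ∀ G : T, Fin (m G) → ℤ
  decomp : ∀ G : T, Ψ.obj G ≅ ⨁ (fun p : Fin (m G) => E⟦-(deg G p)⟧)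
  bas : ∀ (G : T) (n : ℤ), Basis {p : Fin (m G) // deg G p = n} ℂ (E ⟶ G⟦n⟧)
  eval : ∀ (G : T) (p : Fin (m G)),
    biproduct.ι (fun q : Fin (m G) => E⟦-(deg G q)⟧) p ≫ (decomp G).inv ≫ ε.app G =
      ((shiftEquiv' T (-(deg G p)) (deg G p) (neg_add_cancel _)).toAdjunction.homEquiv
        E G).symm (bas G (deg G p) ⟨p, rfl⟩)

/-- `dHom E G = Σᵢ dim Hom(E, G⟦i⟧)`, the total dimension of the graded
Hom's from `E` to `G` (the quantity `d_E(G)` of the paper). -/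
noncomputable def dHom (E G : T) : ℕ := ∑ᶠ i : ℤ, finrank ℂ (E ⟶ G⟦i⟧)

/-
Measure everything against `G` with the Euler form `χ(A, B) = Σᵢ (-1)ⁱ dim Hom(A, B⟦i⟧)`,
which is additive on distinguished triangles in `B`. On the twist triangle
`Φ_E G → Ψ G → G`, where `Ψ G = ⊕ₚ E⟦-deg p⟧` and `Φ_E G ≅ G⟦-d⟧`, Serre duality
`χ(G, E) = (-1)ᵈ χ(E, G)` turns additivity into `(-1)ᵈ χ(E, G)² = ((-1)ᵈ + 1) χ(G, G)`.
So `χ(E, G)` is even (and zero when `d` is odd), and `d_E(G) ≡ χ(E, G) mod 2`.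
-/

section LinearCategory

variable {K C D : Type*} [Field K] [Category C] [Preadditive C] [Linear K C]
  [Category D] [Preadditive D] [Linear K D]

lemma finrank_hom_congr {A A' B B' : C} (eA : A ≅ A') (eB : B ≅ B') :
    finrank K (A ⟶ B) = finrank K (A' ⟶ B') :=
  (Linear.homCongr K eA eB).finrank_eq

lemma id_ne_zero_of_finrank_end_eq_one {A : C} (hA : finrank K (A ⟶ A) = 1) : 𝟙 A ≠ 0 := by
  intro h
  have : Subsingleton (A ⟶ A) :=
    ⟨fun f g => by rw [← Category.id_comp f, ← Category.id_comp g, h, zero_comp, zero_comp]⟩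
  simp [finrank_zero_of_subsingleton] at hA

noncomputable def homBiproductLinearEquiv (X : C) {ι : Type*} [Fintype ι] (Z : ι → C)
    [HasBiproduct Z] : (X ⟶ ⨁ Z) ≃ₗ[K] Π p, (X ⟶ Z p) where
  toFun f p := f ≫ biproduct.π Z p
  map_add' f g := by ext; simp
  map_smul' c f := by ext; simp
  invFun := biproduct.lift
  left_inv f := by ext; simp
  right_inv g := by ext; simp

lemma finrank_hom_biproduct (X : C) {ι : Type*} [Fintype ι] (Z : ι → C) [HasBiproduct Z]
    [∀ p, FiniteDimensional K (X ⟶ Z p)] :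
    finrank K (X ⟶ ⨁ Z) = ∑ p, finrank K (X ⟶ Z p) := by
  rw [(homBiproductLinearEquiv X Z).finrank_eq, Module.finrank_pi_fintype]

lemma range_rightComp_eq_ker (X : C) {Y Z W : C} {f : Y ⟶ Z} {g : Z ⟶ W} (hfg : f ≫ g = 0)
    (hexact : ∀ h : X ⟶ Z, h ≫ g = 0 → ∃ k, h = k ≫ f) :
    LinearMap.range (Linear.rightComp K X f) = LinearMap.ker (Linear.rightComp K X g) := by
  ext h
  simp only [LinearMap.mem_range, LinearMap.mem_ker, Linear.rightComp_apply]
  refine ⟨?_, fun hh => (hexact h hh).imp fun k hk => hk.symm⟩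
  rintro ⟨k, rfl⟩
  rw [Category.assoc, hfg, comp_zero]

lemma ker_rightComp_units_smul (X : C) {Y Z : C} (c : ℤˣ) (φ : Y ⟶ Z) :
    LinearMap.ker (Linear.rightComp K X (c • φ)) = LinearMap.ker (Linear.rightComp K X φ) := by
  ext f
  simp only [LinearMap.mem_ker, Linear.rightComp_apply, Linear.comp_units_smul, smul_eq_zero_iff_eq]

lemma finrank_ker_rightComp_congr (X : C) {Y Y' Z Z' : C} (e₁ : Y ≅ Y') (e₂ : Z ≅ Z')
    {φ : Y ⟶ Z} {φ' : Y' ⟶ Z'} (hφ : e₁.hom ≫ φ' = φ ≫ e₂.hom) :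
    finrank K (LinearMap.ker (Linear.rightComp K X φ)) =
      finrank K (LinearMap.ker (Linear.rightComp K X φ')) := by
  let E₁ := Linear.homCongr K (Iso.refl X) e₁
  let E₂ := Linear.homCongr K (Iso.refl X) e₂
  have hcomm : (Linear.rightComp K X φ').comp E₁.toLinearMap =
      E₂.toLinearMap.comp (Linear.rightComp K X φ) := by
    ext f
    simp [E₁, E₂, Linear.homCongr_apply, hφ]
  have := congrArg LinearMap.ker hcomm
  rw [LinearEquiv.ker_comp, LinearMap.ker_comp, Submodule.comap_equiv_eq_map_symm] at this
  rw [← this, LinearEquiv.finrank_map_eq]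

variable (F : C ⥤ D) [F.Full] [F.Faithful]

lemma finrank_end_map_eq_one [IsAlgClosed K] [F.PreservesZeroMorphisms] {A : C} (hA : finrank K (A ⟶ A) = 1)
    [FiniteDimensional K (F.obj A ⟶ F.obj A)] : finrank K (F.obj A ⟶ F.obj A) = 1 := by
  have hid := id_ne_zero_of_finrank_end_eq_one hA
  refine finrank_endomorphism_eq_one K fun x => ⟨?_, fun hx => ?_⟩
  · rintro h rfl
    apply hid
    apply F.map_injective
    rw [F.map_id, F.map_zero, ← IsIso.hom_inv_id (0 : F.obj A ⟶ F.obj A), zero_comp]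
  · obtain ⟨c, hc⟩ := (finrank_eq_one_iff_of_nonzero' _ hid).mp hA (F.preimage x)
    have hc0 : c ≠ 0 := by
      rintro rfl
      exact hx (by rw [← F.map_preimage x, ← hc, zero_smul, F.map_zero])
    have : IsIso (F.preimage x) := by
      rw [← hc]
      exact ⟨c⁻¹ • 𝟙 A, by simp [smul_smul, hc0], by simp [smul_smul, hc0]⟩
    rw [← F.map_preimage x]
    infer_instance

/-- `F` is semilinear on `Hom(A, -)` along the field automorphism `σ` of `K` defined by
`F.map (c • 𝟙 A) = σ c • 𝟙 (F.obj A)`, so it preserves dimensions although it need not be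
`K`-linear. -/
lemma finrank_hom_map_eq [IsAlgClosed K] [F.Additive] {A : C} (hA : finrank K (A ⟶ A) = 1)
    [FiniteDimensional K (F.obj A ⟶ F.obj A)] (Y : C) :
    finrank K (F.obj A ⟶ F.obj Y) = finrank K (A ⟶ Y) := by
  have hid := id_ne_zero_of_finrank_end_eq_one hA
  have hFA := finrank_end_map_eq_one F hA
  have hidF := id_ne_zero_of_finrank_end_eq_one hFA
  have hscalar : ∀ c : K, ∃ c', F.map (c • 𝟙 A) = c' • 𝟙 (F.obj A) := fun c =>
    ((finrank_eq_one_iff_of_nonzero' _ hidF).mp hFA _).imp fun _ h => h.symm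
  choose σ hσ using hscalar
  have hσ_bij : Function.Bijective σ := by
    refine ⟨fun c c' h => smul_left_injective K hid (F.map_injective ?_), fun c' => ?_⟩
    · rw [hσ, hσ, h]
    · obtain ⟨c, hc⟩ := (finrank_eq_one_iff_of_nonzero' _ hid).mp hA (F.preimage (c' • 𝟙 _))
      refine ⟨c, smul_left_injective K hidF ?_⟩
      simp only [← hσ, hc, F.map_preimage]
  have hsemilinear : ∀ (c : K) (f : A ⟶ Y), F.map (c • f) = σ c • F.map f := fun c f => by
    rw [← Category.id_comp f, ← Linear.smul_comp, F.map_comp, hσ, Linear.smul_comp,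
      Category.id_comp, F.map_comp, F.map_id, Category.id_comp]
  let e : (A ⟶ Y) ≃+ (F.obj A ⟶ F.obj Y) :=
    AddEquiv.ofBijective (F.mapAddHom) ⟨F.map_injective, F.map_surjective⟩
  have := congrArg Cardinal.toNat (lift_rank_eq_of_equiv_equiv σ e hσ_bij hsemilinear).symm
  rwa [Cardinal.toNat_lift, Cardinal.toNat_lift] at this

end LinearCategory

lemma negOnePow_mul_negOnePow_mul (n a : ℤ) : (n.negOnePow : ℤ) * (n.negOnePow * a) = a := by
  rw [← mul_assoc, ← Units.val_mul, Int.units_mul_self, Units.val_one, one_mul]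

lemma finsum_negOnePow_mul_add_succ {f : ℤ → ℤ} (hf : f.HasFiniteSupport) :
    ∑ᶠ i : ℤ, (i.negOnePow : ℤ) * (f i + f (i + 1)) = 0 := by
  have hshift : ∑ᶠ i : ℤ, (i.negOnePow : ℤ) * f (i + 1) = -∑ᶠ i : ℤ, (i.negOnePow : ℤ) * f i := by
    rw [← finsum_comp_equiv (Equiv.subRight 1), ← finsum_neg_distrib]
    refine finsum_congr fun i => ?_
    simp [Int.negOnePow_sub]
  have hf₁ : (fun i : ℤ => (i.negOnePow : ℤ) * f (i + 1)).HasFiniteSupport :=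
    (hf.comp_of_injective (add_left_injective 1)).mul_right _
  simp only [mul_add]
  rw [finsum_add_distrib (by fun_prop) hf₁, hshift, add_neg_cancel]

section Pretriangulated

variable {K C : Type*} [Field K] [Category C] [Preadditive C] [Linear K C] [HasZeroObject C]
  [HasShift C ℤ] [∀ n : ℤ, (shiftFunctor C n).Additive] [Pretriangulated C]

lemma finrank_hom_obj₁_add_finrank_hom_obj₃ (X : C) [∀ Y : C, FiniteDimensional K (X ⟶ Y)]
    {Tr : Triangle C} (hTr : Tr ∈ distTriang C) :
    finrank K (X ⟶ Tr.obj₁) + finrank K (X ⟶ Tr.obj₃) =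
      finrank K (X ⟶ Tr.obj₂) + finrank K (LinearMap.ker (Linear.rightComp K X Tr.mor₁)) +
        finrank K (LinearMap.ker (Linear.rightComp K X (Tr.mor₁⟦(1 : ℤ)⟧'))) := by
  have h₁₂ := range_rightComp_eq_ker (K := K) X (comp_distTriang_mor_zero₁₂ _ hTr)
    (Triangle.coyoneda_exact₂ Tr hTr)
  have h₂₃ := range_rightComp_eq_ker (K := K) X (comp_distTriang_mor_zero₂₃ _ hTr)
    (Triangle.coyoneda_exact₃ Tr hTr)
  have h₃₁ := range_rightComp_eq_ker (K := K) X (comp_distTriang_mor_zero₃₁ _ hTr)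
    (Triangle.coyoneda_exact₁ Tr hTr)
  have r₁ := LinearMap.finrank_range_add_finrank_ker (Linear.rightComp K X Tr.mor₁)
  have r₂ := LinearMap.finrank_range_add_finrank_ker (Linear.rightComp K X Tr.mor₂)
  have r₃ := LinearMap.finrank_range_add_finrank_ker (Linear.rightComp K X Tr.mor₃)
  rw [h₁₂] at r₁
  rw [h₂₃] at r₂
  rw [h₃₁] at r₃
  omega

end Pretriangulated

attribute [instance] HomFiniteBounded.finite

section EulerForm

variable {C : Type*} [Category C] [Preadditive C] [Linear ℂ C] [HasShift C ℤ]

noncomputable def eulerForm (A B : C) : ℤ :=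
  ∑ᶠ i : ℤ, (i.negOnePow : ℤ) * finrank ℂ (A ⟶ B⟦i⟧)

lemma hasFiniteSupport_finrank_hom_shift [HomFiniteBounded C] (A B : C) :
    (fun i : ℤ => (finrank ℂ (A ⟶ B⟦i⟧) : ℤ)).HasFiniteSupport := by
  obtain ⟨N, hN⟩ := HomFiniteBounded.bounded A B
  refine (Set.finite_Icc (-(N : ℤ)) N).subset fun i hi => ?_
  by_contra hout
  have : Subsingleton (A ⟶ B⟦i⟧) :=
    ⟨fun f g => (hN i (by rw [Set.mem_Icc] at hout; rw [lt_abs]; omega) f).trans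
      (hN i (by rw [Set.mem_Icc] at hout; rw [lt_abs]; omega) g).symm⟩
  exact hi (by simp [finrank_zero_of_subsingleton])

lemma eulerForm_congr (A : C) {B B' : C} (e : B ≅ B') : eulerForm A B = eulerForm A B' :=
  finsum_congr fun i => by rw [finrank_hom_congr (Iso.refl A) ((shiftFunctor C i).mapIso e)]

lemma eulerForm_shift (A B : C) (n : ℤ) : eulerForm A (B⟦n⟧) = n.negOnePow * eulerForm A B := by
  have hB : ∀ i, finrank ℂ (A ⟶ B⟦n⟧⟦i⟧) = finrank ℂ (A ⟶ B⟦n + i⟧) := fun i =>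
    finrank_hom_congr (Iso.refl A) ((shiftFunctorAdd' C n i (n + i) rfl).app B).symm
  rw [eulerForm, eulerForm, mul_finsum]
  conv_rhs => rw [← finsum_comp_equiv (Equiv.addLeft n)]
  refine finsum_congr fun i => ?_
  rw [hB, Equiv.coe_addLeft, Int.negOnePow_add, Units.val_mul, mul_assoc,
    negOnePow_mul_negOnePow_mul]

lemma eulerForm_biproduct [HomFiniteBounded C] [∀ n : ℤ, (shiftFunctor C n).Additive] (X : C)
    {ι : Type} [Fintype ι] (Y : ι → C) [HasBiproduct Y] :
    eulerForm X (⨁ Y) = ∑ p, eulerForm X (Y p) := by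
  have hrank : ∀ i : ℤ, finrank ℂ (X ⟶ (⨁ Y)⟦i⟧) = ∑ p, finrank ℂ (X ⟶ (Y p)⟦i⟧) := fun i => by
    rw [finrank_hom_congr (Iso.refl X) ((shiftFunctor C i).mapBiproduct Y), finrank_hom_biproduct]
    rfl
  simp only [eulerForm, hrank, Nat.cast_sum, Finset.mul_sum]
  exact finsum_sum_comm _ _ fun p _ => (hasFiniteSupport_finrank_hom_shift X (Y p)).mul_right _

lemma eulerForm_triangle [HomFiniteBounded C] [HasZeroObject C]
    [∀ n : ℤ, (shiftFunctor C n).Additive] [Pretriangulated C] (X : C) {Tr : Triangle C}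
    (hTr : Tr ∈ distTriang C) :
    eulerForm X Tr.obj₂ = eulerForm X Tr.obj₁ + eulerForm X Tr.obj₃ := by
  let κ : ℤ → ℤ := fun i => finrank ℂ (LinearMap.ker (Linear.rightComp ℂ X (Tr.mor₁⟦i⟧')))
  have hseam : ∀ i : ℤ,
      finrank ℂ (LinearMap.ker (Linear.rightComp ℂ X (Tr.mor₁⟦i⟧'⟦(1 : ℤ)⟧'))) =
        finrank ℂ (LinearMap.ker (Linear.rightComp ℂ X (Tr.mor₁⟦i + 1⟧'))) := fun i =>
    finrank_ker_rightComp_congr X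
      ((shiftFunctorAdd' C i 1 (i + 1) rfl).app Tr.obj₁).symm
      ((shiftFunctorAdd' C i 1 (i + 1) rfl).app Tr.obj₂).symm
      ((shiftFunctorAdd' C i 1 (i + 1) rfl).inv.naturality Tr.mor₁).symm
  have hrank : ∀ i : ℤ, (finrank ℂ (X ⟶ Tr.obj₁⟦i⟧) : ℤ) + finrank ℂ (X ⟶ Tr.obj₃⟦i⟧) =
      finrank ℂ (X ⟶ Tr.obj₂⟦i⟧) + (κ i + κ (i + 1)) := fun i => by
    have h : finrank ℂ (X ⟶ Tr.obj₁⟦i⟧) + finrank ℂ (X ⟶ Tr.obj₃⟦i⟧) =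
        finrank ℂ (X ⟶ Tr.obj₂⟦i⟧) +
        finrank ℂ (LinearMap.ker (Linear.rightComp ℂ X (i.negOnePow • Tr.mor₁⟦i⟧'))) +
        finrank ℂ (LinearMap.ker (Linear.rightComp ℂ X ((i.negOnePow • Tr.mor₁⟦i⟧')⟦(1 : ℤ)⟧'))) :=
      finrank_hom_obj₁_add_finrank_hom_obj₃ X (Tr.shift_distinguished hTr i)
    rw [ker_rightComp_units_smul, Functor.map_units_smul, ker_rightComp_units_smul, hseam] at h
    simp only [κ]
    omega
  have hκ : κ.HasFiniteSupport := (hasFiniteSupport_finrank_hom_shift X Tr.obj₁).subset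
    fun i hi => by
      have := Submodule.finrank_le (LinearMap.ker (Linear.rightComp ℂ X (Tr.mor₁⟦i⟧')))
      simp only [Function.mem_support, κ] at hi ⊢
      omega
  have hκ' : (fun i : ℤ => (i.negOnePow : ℤ) * (κ i + κ (i + 1))).HasFiniteSupport :=
    (hκ.add (hκ.comp_of_injective (add_left_injective 1))).mul_right _
  have h₁ := hasFiniteSupport_finrank_hom_shift X Tr.obj₁
  have h₂ := hasFiniteSupport_finrank_hom_shift X Tr.obj₂
  have h₃ := hasFiniteSupport_finrank_hom_shift X Tr.obj₃
  calc eulerForm X Tr.obj₂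
      = eulerForm X Tr.obj₂ + ∑ᶠ i : ℤ, (i.negOnePow : ℤ) * (κ i + κ (i + 1)) := by
        rw [finsum_negOnePow_mul_add_succ hκ, add_zero]
    _ = ∑ᶠ i : ℤ, (i.negOnePow : ℤ) *
          (finrank ℂ (X ⟶ Tr.obj₁⟦i⟧) + finrank ℂ (X ⟶ Tr.obj₃⟦i⟧) : ℤ) := by
        rw [eulerForm, ← finsum_add_distrib (by fun_prop) hκ']
        exact finsum_congr fun i => by rw [← mul_add, hrank]
    _ = eulerForm X Tr.obj₁ + eulerForm X Tr.obj₃ := by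
        simp only [mul_add]
        rw [eulerForm, eulerForm, finsum_add_distrib (by fun_prop) (by fun_prop)]

lemma CalabiYau.finrank_hom_eq (d : ℤ) [CalabiYau C d] (A B : C) [FiniteDimensional ℂ (A ⟶ B)] :
    finrank ℂ (A ⟶ B) = finrank ℂ (B ⟶ A⟦d⟧) := by
  let p : (A ⟶ B) →ₗ[ℂ] (B ⟶ A⟦d⟧) →ₗ[ℂ] ℂ := (Linear.comp A B (A⟦d⟧)).compr₂ (CalabiYau.tr A)
  have : p.IsPerfPair := .of_injective
    ((injective_iff_map_eq_zero p).2 fun f hf =>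
      CalabiYau.nondegen_left A B f fun g => LinearMap.congr_fun hf g)
    ((injective_iff_map_eq_zero p.flip).2 fun g hg =>
      CalabiYau.nondegen_right A B g fun f => LinearMap.congr_fun hg f)
  exact Module.finrank_of_isPerfPair p

lemma finrank_hom_shift_swap [HomFiniteBounded C] [∀ n : ℤ, (shiftFunctor C n).Additive]
    (d : ℤ) [CalabiYau C d] {E : C} (hE : finrank ℂ (E ⟶ E) = 1) (G : C) (j : ℤ) :
    finrank ℂ (G ⟶ E⟦j⟧) = finrank ℂ (E ⟶ G⟦d - j⟧) := calc
  finrank ℂ (G ⟶ E⟦j⟧) = finrank ℂ (G ⟶ E⟦j - d⟧⟦d⟧) :=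
    finrank_hom_congr (Iso.refl G) ((shiftFunctorAdd' C (j - d) d j (by ring)).app E)
  _ = finrank ℂ (E⟦j - d⟧ ⟶ G) := (CalabiYau.finrank_hom_eq d _ _).symm
  _ = finrank ℂ (E⟦j - d⟧ ⟶ G⟦d - j⟧⟦j - d⟧) :=
    finrank_hom_congr (Iso.refl _) ((shiftFunctorCompIsoId C (d - j) (j - d) (by ring)).app G).symm
  _ = finrank ℂ (E ⟶ G⟦d - j⟧) := finrank_hom_map_eq (shiftFunctor C (j - d)) hE _

lemma eulerForm_swap [HomFiniteBounded C] [∀ n : ℤ, (shiftFunctor C n).Additive]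
    (d : ℤ) [CalabiYau C d] {E : C} (hE : finrank ℂ (E ⟶ E) = 1) (G : C) :
    eulerForm G E = d.negOnePow * eulerForm E G := by
  rw [eulerForm, eulerForm, mul_finsum]
  conv_rhs => rw [← finsum_comp_equiv (Equiv.subLeft d)]
  refine finsum_congr fun j => ?_
  rw [finrank_hom_shift_swap d hE, Equiv.subLeft_apply, Int.negOnePow_sub, Units.val_mul,
    mul_assoc, negOnePow_mul_negOnePow_mul]

lemma IsSpherical.finrank_end {d : ℤ} {E : C} (hE : IsSpherical d E) :
    finrank ℂ (E ⟶ E) = 1 :=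
  (finrank_hom_congr (Iso.refl E) ((shiftFunctorZero C ℤ).app E)).symm.trans hE.1

lemma even_dHom_iff [HomFiniteBounded C] (A B : C) : Even (dHom A B) ↔ Even (eulerForm A B) := by
  have hf := hasFiniteSupport_finrank_hom_shift A B
  have hcast : (dHom A B : ℤ) = ∑ᶠ i : ℤ, (finrank ℂ (A ⟶ B⟦i⟧) : ℤ) :=
    (Nat.castAddMonoidHom ℤ).map_finsum (hf.subset fun i hi => by simpa using hi)
  have hdiff : Even ((dHom A B : ℤ) - eulerForm A B) := by
    rw [hcast, eulerForm, ← finsum_sub_distrib hf (by fun_prop)]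
    refine finsum_induction _ Even.zero (fun _ _ => Even.add) fun i => ?_
    rcases Int.even_or_odd i with hi | hi
    · simp [Int.negOnePow_even i hi]
    · simp [Int.negOnePow_odd i hi, ← two_mul]
  rw [← Int.even_coe_nat]
  exact Int.even_sub.mp hdiff

end EulerForm

lemma even_of_negOnePow_mul_sq_eq {n a b : ℤ}
    (h : (n.negOnePow : ℤ) * a ^ 2 = (n.negOnePow + 1) * b) : Even a := by
  rcases Int.even_or_odd n with hn | hn
  · rw [Int.negOnePow_even n hn] at h
    exact (Int.even_pow' two_ne_zero).mp ⟨b, by push_cast at h; linarith⟩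
  · rw [Int.negOnePow_odd n hn] at h
    have : a ^ 2 = 0 := by push_cast at h; linarith
    simp [pow_eq_zero_iff two_ne_zero |>.mp this]

namespace SphericalTwist

variable {E : T} (tE : SphericalTwist E)

lemma sum_negOnePow_deg (G : T) : ∑ p, ((tE.deg G p).negOnePow : ℤ) = eulerForm E G := by
  classical
  have hcard : ∀ n, finrank ℂ (E ⟶ G⟦n⟧) = (Finset.univ.filter fun p => tE.deg G p = n).card :=
    fun n => by rw [finrank_eq_card_basis (tE.bas G n), Fintype.card_subtype]
  rw [eulerForm, finsum_eq_sum_of_support_subset (s := Finset.univ.image (tE.deg G)),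
    Finset.sum_comp (fun n : ℤ => (n.negOnePow : ℤ)) (tE.deg G)]
  · simp [hcard, mul_comm]
  · intro n hn
    by_contra hnot
    have hempty : (Finset.univ.filter fun p => tE.deg G p = n) = ∅ :=
      Finset.filter_eq_empty_iff.2 fun p _ hp => hnot (by simp [← hp])
    simp [hcard, hempty] at hn

lemma eulerForm_Ψ_obj [HomFiniteBounded T] (X G : T) :
    eulerForm X (tE.Ψ.obj G) = eulerForm E G * eulerForm X E := by
  rw [eulerForm_congr X (tE.decomp G), eulerForm_biproduct, ← tE.sum_negOnePow_deg G,
    Finset.sum_mul]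
  exact Finset.sum_congr rfl fun p _ => by rw [eulerForm_shift, Int.negOnePow_neg]

end SphericalTwist

theorem dHom_even_of_twist_shift_general
    [HomFiniteBounded T] (d : ℕ) [CalabiYau T (d : ℤ)]
    {E : T} (hE : IsSpherical (d : ℤ) E) (tE : SphericalTwist E) (G : T)
    (hG : Nonempty (tE.Φ.obj G ≅ G⟦-(d : ℤ)⟧)) :
    Even (dHom E G) ∧ dHom E G ≠ 1 := by
  obtain ⟨e⟩ := hG
  have key : ((d : ℤ).negOnePow : ℤ) * eulerForm E G ^ 2 =
      ((d : ℤ).negOnePow + 1) * eulerForm G G := calc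
    _ = eulerForm E G * eulerForm G E := by rw [eulerForm_swap d hE.finrank_end]; ring
    _ = eulerForm G (tE.Ψ.obj G) := (tE.eulerForm_Ψ_obj G G).symm
    _ = eulerForm G (tE.Φ.obj G) + eulerForm G G := eulerForm_triangle G (tE.dist G)
    _ = _ := by rw [eulerForm_congr G e, eulerForm_shift, Int.negOnePow_neg]; ring
  have heven : Even (dHom E G) := (even_dHom_iff E G).2 (even_of_negOnePow_mul_sq_eq key)
  exact ⟨heven, fun h => Nat.not_even_one (h ▸ heven)⟩

/-- Let `X` be a smooth complex projective Calabi-Yau variety of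
dimension `d ≥ 2`, `E` a spherical object of `D(X)` and `G` an object with
`Φ_E(G) ≅ G⟦-d⟧`.  Then `d_E(G) = Σᵢ dim Hom(E, G[i])` is even; in particular
`d_E(G) ≠ 1`. -/
theorem dHom_even_of_twist_shift
    [HomFiniteBounded T] (d : ℕ) (hd : 2 ≤ d) [CalabiYau T (d : ℤ)]
    {E : T} (hE : IsSpherical (d : ℤ) E) (tE : SphericalTwist E) (G : T)
    (hG : Nonempty (tE.Φ.obj G ≅ G⟦-(d : ℤ)⟧)) :
    Even (dHom E G) ∧ dHom E G ≠ 1 :=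
  dHom_even_of_twist_shift_general d hE tE G hG

end SphericalPaper
end

section
/- Let X be a smooth complex projective Calabi-Yau variety of dimension d ≥ 2 and let E and F be spherical objects of D(X) whose spherical twists commute, Φ_E ∘ Φ_F ≅ Φ_F ∘ Φ_E. Then for any object G of D(X), G lies in ⟨E⟩ if and only if Φ_F(G) lies in ⟨E⟩. -/
/-!
This file formalizes a statement from "Commuting reflection functors and
orthogonal spherical objects".  Mathlib does not have bounded derived categories
of coherent sheaves on smooth projective varieties, so the geometric setting is
axiomatized: `T` plays the role of the bounded derived category `D(X)` of a
smooth complex projective variety `X` — a ℂ-linear triangulated category with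
finite-dimensional, bounded graded Hom's — and the Calabi-Yau condition is
expressed by Serre duality in the form of a perfect trace pairing
`Hom(A,B) × Hom(B,A⟦d⟧) → ℂ`.
-/

open CategoryTheory Limits Pretriangulated Module

universe v u

namespace SphericalPaper

variable (T : Type u) [Category.{v} T] [Preadditive T] [Linear ℂ T]
  [HasZeroObject T] [HasShift T ℤ] [∀ n : ℤ, (shiftFunctor T n).Additive]
  [Pretriangulated T] [HasFiniteBiproducts T]

variable {T}

/-- Membership in `⟨E⟩`, the smallest strictly full triangulated subcategory of
`T` containing `E`: the closure of `{E}` under isomorphisms, shifts and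
extensions (cones) in distinguished triangles. -/
inductive Generates (E : T) : T → Prop
  | self : Generates E E
  | of_iso {G G' : T} : (G ≅ G') → Generates E G → Generates E G'
  | shift (G : T) (n : ℤ) : Generates E G → Generates E (G⟦n⟧)
  | ext (Tr : Triangle T) : (Tr ∈ distTriang T) → Generates E Tr.obj₁ →
      Generates E Tr.obj₃ → Generates E Tr.obj₂

/-!
Since `d ≥ 2`, the section of the evaluation map `RHom(E, E) ⊗ E → E` given by `id_E` together
with `Hom(E, E⟦1⟧) = Hom(E, E⟦1 - d⟧) = 0` gives `Hom(E, Φ_E(E)⟦1⟧) = 0`. As `Φ_F` is fully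
faithful and commutes with `Φ_E` and with shifts, also `Hom(Φ_F E, Φ_E(Φ_F E)⟦1⟧) = 0`, so the
defining triangle of `Φ_E` at `Φ_F E` splits: `Φ_F E` is a retract of `RHom(E, Φ_F E) ⊗ E`, a
finite sum of shifts of `E`. Both `Φ_F E` and the shifts of `E` have division endomorphism rings,
which forces `Φ_F E ≅ E⟦k⟧` for some `k`. A triangulated autoequivalence sending `E` to a shift
of `E` preserves `⟨E⟩`, and so does its inverse.
-/

section DivisionEnd

variable {C : Type*} [Category C] [Preadditive C]

structure IsDivisionEnd (X : C) : Prop where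
  id_ne_zero : 𝟙 X ≠ 0
  isIso_of_ne_zero : ∀ f : X ⟶ X, f ≠ 0 → IsIso f

namespace IsDivisionEnd

lemma of_forall_eq_smul_id {X : C} [Linear ℂ C] (h₁ : 𝟙 X ≠ 0)
    (h : ∀ f : X ⟶ X, ∃ c : ℂ, f = c • 𝟙 X) : IsDivisionEnd X where
  id_ne_zero := h₁
  isIso_of_ne_zero f hf := by
    obtain ⟨c, rfl⟩ := h f
    have hc : c ≠ 0 := by rintro rfl; exact hf (zero_smul ℂ _)
    exact ⟨c⁻¹ • 𝟙 X, by simp [smul_smul, hc], by simp [smul_smul, hc]⟩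

lemma map {D : Type*} [Category D] [Preadditive D] {X : C} (hX : IsDivisionEnd X)
    (Φ : C ⥤ D) [Φ.Full] [Φ.Faithful] [Φ.PreservesZeroMorphisms] :
    IsDivisionEnd (Φ.obj X) where
  id_ne_zero h := hX.id_ne_zero (Φ.map_injective (by rw [Φ.map_id, h, Φ.map_zero]))
  isIso_of_ne_zero g hg := by
    obtain ⟨f, rfl⟩ := Φ.map_surjective g
    have := hX.isIso_of_ne_zero f (by rintro rfl; exact hg (Φ.map_zero _ _))
    infer_instance

lemma isIso_of_iso_of_ne_zero {X Y : C} (hX : IsDivisionEnd X) (e : X ≅ Y) {r : Y ⟶ X}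
    (hr : r ≠ 0) : IsIso r := by
  have := hX.isIso_of_ne_zero (e.hom ≫ r) (by simpa using hr)
  exact IsIso.of_isIso_comp_left e.hom r

lemma ne_zero_of_isIso {X : C} (hX : IsDivisionEnd X) (f : X ⟶ X) [IsIso f] : f ≠ 0 := by
  rintro rfl
  exact hX.id_ne_zero (by rw [← IsIso.hom_inv_id (0 : X ⟶ X), zero_comp])

lemma isIso_of_isIso_comp {A B : C} (hA : IsDivisionEnd A) (hB : IsDivisionEnd B)
    (s : A ⟶ B) (r : B ⟶ A) [IsIso (s ≫ r)] : IsIso s := by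
  have hrs : r ≫ s ≠ 0 := fun h => hA.ne_zero_of_isIso ((s ≫ r) ≫ (s ≫ r)) (by
    rw [Category.assoc, ← Category.assoc r, h, zero_comp, comp_zero])
  have := hB.isIso_of_ne_zero _ hrs
  have : IsSplitMono s := ⟨⟨r ≫ inv (s ≫ r), by rw [← Category.assoc, IsIso.hom_inv_id]⟩⟩
  have : IsSplitEpi s := ⟨⟨inv (r ≫ s) ≫ r, by rw [Category.assoc, IsIso.inv_hom_id]⟩⟩
  exact isIso_of_mono_of_isSplitEpi s

lemma exists_iso_of_retract_biproduct {A : C} (hA : IsDivisionEnd A) {ι : Type} [Fintype ι]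
    {f : ι → C} [HasBiproduct f] (hf : ∀ i, IsDivisionEnd (f i)) (s : A ⟶ ⨁ f) (r : ⨁ f ⟶ A)
    (hsr : s ≫ r = 𝟙 A) : ∃ i, Nonempty (A ≅ f i) := by
  have hsum : ∑ i, (s ≫ biproduct.π f i) ≫ (biproduct.ι f i ≫ r) = 𝟙 A :=
    calc _ = s ≫ (∑ i, biproduct.π f i ≫ biproduct.ι f i) ≫ r := by
          simp only [Preadditive.sum_comp, Preadditive.comp_sum, Category.assoc]
      _ = 𝟙 A := by rw [biproduct.total, Category.id_comp, hsr]
  obtain ⟨i, hi⟩ : ∃ i, (s ≫ biproduct.π f i) ≫ (biproduct.ι f i ≫ r) ≠ 0 := by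
    by_contra! h
    exact hA.id_ne_zero (by rw [← hsum, Finset.sum_eq_zero fun i _ => h i])
  have := hA.isIso_of_ne_zero _ hi
  have := hA.isIso_of_isIso_comp (hf i) (s ≫ biproduct.π f i) (biproduct.ι f i ≫ r)
  exact ⟨i, ⟨asIso (s ≫ biproduct.π f i)⟩⟩

end IsDivisionEnd

end DivisionEnd

namespace Generates

variable {C : Type*} [Category C] [Preadditive C] [HasZeroObject C] [HasShift C ℤ]
  [∀ n : ℤ, (shiftFunctor C n).Additive] [Pretriangulated C]

lemma map {E E' : C} (Φ : C ⥤ C) [Φ.CommShift ℤ] [Φ.IsTriangulated]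
    (hE : Generates E' (Φ.obj E)) {G : C} (hG : Generates E G) : Generates E' (Φ.obj G) := by
  induction hG with
  | self => exact hE
  | of_iso e _ ih => exact of_iso (Φ.mapIso e) ih
  | shift G n _ ih => exact of_iso ((Φ.commShiftIso n).app G).symm (shift _ n ih)
  | ext Tr hTr _ _ ih₁ ih₃ => exact ext _ (Φ.map_distinguished _ hTr) ih₁ ih₃

lemma of_shift {E X : C} (n : ℤ) (h : Generates E (X⟦n⟧)) : Generates E X :=
  of_iso ((shiftFunctorCompIsoId C n (-n) (add_neg_cancel n)).app X) (shift _ (-n) h)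

lemma iff_of_obj_iso_shift (Φ : C ⥤ C) [Φ.IsEquivalence] [Φ.CommShift ℤ] [Φ.IsTriangulated]
    {E : C} {k : ℤ} (h : Φ.obj E ≅ E⟦k⟧) (G : C) : Generates E G ↔ Generates E (Φ.obj G) := by
  let e := Φ.asEquivalence
  let : e.functor.CommShift ℤ := ‹Φ.CommShift ℤ›
  let := e.commShiftInverse ℤ
  have := e.commShift_of_functor ℤ
  have : e.functor.IsTriangulated := ‹Φ.IsTriangulated›
  have : e.inverse.IsTriangulated := e.toAdjunction.isTriangulated_rightAdjoint
  have hinv : Generates E (e.inverse.obj E) := of_shift k <| of_iso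
    (((e.inverse.commShiftIso k).app E).symm ≪≫ e.inverse.mapIso h.symm ≪≫
      e.unitIso.symm.app E).symm self
  exact ⟨map Φ (of_iso h.symm (shift _ k self)),
    fun hG => of_iso (e.unitIso.symm.app G) (map e.inverse hinv hG)⟩

end Generates

namespace IsSpherical

variable {C : Type*} [Category C] [Preadditive C] [Linear ℂ C] [HasShift C ℤ] {d : ℤ} {E : C}

lemma finrank_end_s7 (hE : IsSpherical d E) : finrank ℂ (E ⟶ E) = 1 :=
  (Linear.homCongr ℂ (Iso.refl E) ((shiftFunctorZero C ℤ).app E)).finrank_eq.symm.trans hE.1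

lemma isDivisionEnd (hE : IsSpherical d E) : IsDivisionEnd E := by
  have hid : 𝟙 E ≠ 0 := by
    intro h
    have : Subsingleton (E ⟶ E) := ⟨fun f g => by
      rw [← Category.comp_id f, ← Category.comp_id g, h, comp_zero, comp_zero]⟩
    simpa [finrank_zero_of_subsingleton] using hE.finrank_end_s7
  refine .of_forall_eq_smul_id hid fun f => ?_
  obtain ⟨c, hc⟩ := (finrank_eq_one_iff_of_nonzero' (𝟙 E) hid).mp hE.finrank_end_s7 f
  exact ⟨c, hc.symm⟩

lemma hom_shift_shift_eq_zero (hE : IsSpherical d E) {a b : ℤ} (h₀ : a + b ≠ 0)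
    (hd : a + b ≠ d) (f : E ⟶ (E⟦a⟧)⟦b⟧) : f = 0 := by
  rw [← cancel_mono ((shiftFunctorAdd' C a b (a + b) rfl).inv.app E), zero_comp]
  exact hE.2.2 _ h₀ hd _

end IsSpherical

namespace SphericalTwist

variable {d : ℤ} {E : T} (t : SphericalTwist E)

lemma deg_eq_zero_or_eq (hE : IsSpherical d E) (p : Fin (t.m E)) :
    t.deg E p = 0 ∨ t.deg E p = d := by
  by_contra! h
  exact (t.bas E _).ne_zero ⟨p, rfl⟩ (hE.2.2 _ h.1 h.2 _)

/-- `Ψ E` is a sum of copies of `E` and `E⟦-d⟧`, and `Hom(E, E⟦1⟧) = Hom(E, E⟦1 - d⟧) = 0`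
because `d ≥ 2`. -/
lemma hom_Ψ_shift_one_eq_zero (hE : IsSpherical d E) (hd : 2 ≤ d)
    (φ : E ⟶ (t.Ψ.obj E)⟦(1 : ℤ)⟧) : φ = 0 := by
  let e := (shiftFunctor T (1 : ℤ)).mapIso (t.decomp E) ≪≫
    (shiftFunctor T (1 : ℤ)).mapBiproduct _
  rw [← cancel_mono e.hom, zero_comp]
  refine biproduct.hom_ext _ _ fun p => ?_
  rw [zero_comp]
  apply hE.hom_shift_shift_eq_zero <;> rcases t.deg_eq_zero_or_eq hE p with h | h <;> omega

lemma exists_section_ε_app_self (hE : IsSpherical d E) :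
    ∃ σ : E ⟶ t.Ψ.obj E, σ ≫ t.ε.app E = 𝟙 E := by
  obtain ⟨⟨p, hp⟩⟩ : Nonempty {p : Fin (t.m E) // t.deg E p = 0} := by
    rw [← Fintype.card_pos_iff, ← finrank_eq_card_basis (t.bas E 0), hE.1]
    exact one_pos
  set r := biproduct.ι (fun q => E⟦-(t.deg E q)⟧) p ≫ (t.decomp E).inv ≫ t.ε.app E with hr_def
  have hr : r ≠ 0 := by
    rw [hr_def, t.eval E p]
    intro h
    apply (t.bas E _).ne_zero ⟨p, rfl⟩
    exact ((Equiv.symm_apply_eq _).mp h).trans ((Adjunction.homEquiv_unit _ _ _ _).trans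
      (by dsimp only [shiftEquiv']; rw [Functor.map_zero, comp_zero]))
  have := hE.isDivisionEnd.isIso_of_iso_of_ne_zero
    ((shiftFunctorZero' T (-t.deg E p) (by simp [hp])).app E).symm hr
  exact ⟨inv r ≫ biproduct.ι (fun q => E⟦-(t.deg E q)⟧) p ≫ (t.decomp E).inv,
    by simp only [Category.assoc]; exact IsIso.inv_hom_id r⟩

lemma δ_app_self_eq_zero (hE : IsSpherical d E) : t.δ.app E = 0 := by
  obtain ⟨σ, hσ⟩ := t.exists_section_ε_app_self hE
  have h₂₃ : t.ε.app E ≫ t.δ.app E = 0 := comp_distTriang_mor_zero₂₃ _ (t.dist E)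
  calc t.δ.app E = (σ ≫ t.ε.app E) ≫ t.δ.app E := by rw [hσ, Category.id_comp]
    _ = 0 := by rw [Category.assoc, h₂₃, comp_zero]

lemma hom_Φ_shift_one_eq_zero (hE : IsSpherical d E) (hd : 2 ≤ d)
    (ψ : E ⟶ (t.Φ.obj E)⟦(1 : ℤ)⟧) : ψ = 0 := by
  obtain ⟨χ, rfl⟩ := Triangle.coyoneda_exact₃ _ (rot_of_distTriang _ (t.dist E)) ψ
    (t.hom_Ψ_shift_one_eq_zero hE hd _)
  exact (congrArg (χ ≫ ·) (t.δ_app_self_eq_zero hE)).trans comp_zero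

lemma exists_iso_shift_of_δ_app_eq_zero (hE : IsDivisionEnd E) {A : T} (hA : IsDivisionEnd A)
    (hδ : t.δ.app A = 0) : ∃ n : ℤ, Nonempty (A ≅ E⟦n⟧) := by
  obtain ⟨σ, hσ⟩ : ∃ σ : A ⟶ t.Ψ.obj A, 𝟙 A = σ ≫ t.ε.app A :=
    Triangle.coyoneda_exact₃ _ (t.dist A) (𝟙 A)
    (by simp only [Triangle.mk_mor₃, hδ]; exact comp_zero)
  obtain ⟨p, he⟩ := hA.exists_iso_of_retract_biproduct (fun p => hE.map (shiftFunctor T _))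
    (σ ≫ (t.decomp A).hom) ((t.decomp A).inv ≫ t.ε.app A)
    (by simp only [Category.assoc, Iso.hom_inv_id_assoc]; exact hσ.symm)
  exact ⟨_, he⟩

lemma δ_app_map_eq_zero_of_commute (hE : IsSpherical d E) (hd : 2 ≤ d) (Φ : T ⥤ T)
    [Φ.CommShift ℤ] [Φ.Full] [Φ.PreservesZeroMorphisms]
    (hcomm : Nonempty (Φ ⋙ t.Φ ≅ t.Φ ⋙ Φ)) : t.δ.app (Φ.obj E) = 0 := by
  obtain ⟨η⟩ := hcomm
  let e : (t.Φ.obj (Φ.obj E))⟦(1 : ℤ)⟧ ≅ Φ.obj ((t.Φ.obj E)⟦(1 : ℤ)⟧) :=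
    (shiftFunctor T (1 : ℤ)).mapIso (η.app E) ≪≫ ((Φ.commShiftIso (1 : ℤ)).app _).symm
  rw [← cancel_mono e.hom, zero_comp, ← Φ.map_preimage (t.δ.app _ ≫ e.hom),
    t.hom_Φ_shift_one_eq_zero hE hd (Φ.preimage _), Φ.map_zero]

lemma exists_map_obj_iso_shift_of_commute (hE : IsSpherical d E) (hd : 2 ≤ d) (Φ : T ⥤ T)
    [Φ.CommShift ℤ] [Φ.Full] [Φ.Faithful] [Φ.PreservesZeroMorphisms]
    (hcomm : Nonempty (Φ ⋙ t.Φ ≅ t.Φ ⋙ Φ)) : ∃ k : ℤ, Nonempty (Φ.obj E ≅ E⟦k⟧) :=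
  t.exists_iso_shift_of_δ_app_eq_zero hE.isDivisionEnd (hE.isDivisionEnd.map Φ)
    (t.δ_app_map_eq_zero_of_commute hE hd Φ hcomm)

end SphericalTwist

theorem generated_iff_twist_generated_general
    (d : ℕ) (hd : 2 ≤ d)
    {E F : T} (hE : IsSpherical (d : ℤ) E)
    (tE : SphericalTwist E) (tF : SphericalTwist F)
    (hcomm : Nonempty (tF.Φ ⋙ tE.Φ ≅ tE.Φ ⋙ tF.Φ)) :
    ∀ G : T, Generates E G ↔ Generates E (tF.Φ.obj G) := by
  have := tF.equiv
  let := tF.commShift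
  have := tF.triangulated
  obtain ⟨k, ⟨e⟩⟩ := tE.exists_map_obj_iso_shift_of_commute hE (by exact_mod_cast hd) tF.Φ hcomm
  exact Generates.iff_of_obj_iso_shift tF.Φ e

/-- Let `X` be a smooth complex projective Calabi-Yau variety of
dimension `d ≥ 2` and let `E`, `F` be spherical objects of `D(X)` whose spherical
twists commute, `Φ_E ∘ Φ_F ≅ Φ_F ∘ Φ_E`.  Then for any object `G` of `D(X)`,
`G ∈ ⟨E⟩` if and only if `Φ_F(G) ∈ ⟨E⟩`. -/
theorem generated_iff_twist_generated
    [HomFiniteBounded T] (d : ℕ) (hd : 2 ≤ d) [CalabiYau T (d : ℤ)]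
    {E F : T} (hE : IsSpherical (d : ℤ) E) (hF : IsSpherical (d : ℤ) F)
    (tE : SphericalTwist E) (tF : SphericalTwist F)
    (hcomm : Nonempty (tF.Φ ⋙ tE.Φ ≅ tE.Φ ⋙ tF.Φ)) :
    ∀ G : T, Generates E G ↔ Generates E (tF.Φ.obj G) :=
  generated_iff_twist_generated_general d hd hE tE tF hcomm

end SphericalPaper
end

section
/- Let E be a simple vector bundle on a smooth complex projective variety X and let x be a closed point of X. Writing E_H = E ⊗_C Hom(E, O_x) and ev : E_H → O_x for the canonical evaluation map, the map Hom(E_H, E_H) → Hom(E_H, O_x) given by composition with ev is injective. -/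
/-!
This file formalizes a statement from "Commuting reflection functors and
orthogonal spherical objects".  Mathlib does not have bounded derived categories
of coherent sheaves on smooth projective varieties, so the geometric setting is
axiomatized: `T` plays the role of the bounded derived category `D(X)` of a
smooth complex projective variety `X` — a ℂ-linear triangulated category with
finite-dimensional, bounded graded Hom's — and the Calabi-Yau condition is
expressed by Serre duality in the form of a perfect trace pairing
`Hom(A,B) × Hom(B,A⟦d⟧) → ℂ`.
-/

open CategoryTheory Limits Pretriangulated Module

universe v u

namespace SphericalPaper

variable (T : Type u) [Category.{v} T] [Preadditive T] [Linear ℂ T]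
  [HasZeroObject T] [HasShift T ℤ] [∀ n : ℤ, (shiftFunctor T n).Additive]
  [Pretriangulated T] [HasFiniteBiproducts T]

/-- An abstraction of the coherent-sheaf geometry of a smooth complex
projective variety `X` of dimension `d`, as seen inside its bounded derived
category `T = D(X)`: the closed points of `X` with their skyscraper sheaves,
the classes of objects which are coherent sheaves, locally free sheaves
(vector bundles) and torsion-free sheaves, ranks, the singularity set of a
sheaf (the locus where it fails to be locally free) and double duals, together
with their standard basic properties. -/
structure VarietyGeometry (d : ℕ) where
  /-- the closed points of `X` -/
  Pt : Type v
  /-- the skyscraper sheaf `𝒪ₓ` at a closed point -/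
  sky : Pt → T
  /-- the objects of `T = D(X)` which are coherent sheaves (in degree `0`) -/
  IsSheaf : T → Prop
  /-- the locally free sheaves (vector bundles) -/
  IsLocallyFree : T → Prop
  /-- the torsion-free sheaves -/
  IsTorsionFree : T → Prop
  /-- the rank of a sheaf -/
  rank : T → ℕ
  /-- the singularity set of a sheaf: the locus where it is not locally free -/
  singSet : T → Set Pt
  /-- the double dual `A ↦ A^{**}` of a sheaf -/
  ddual : T → T
  /-- the canonical map `A → A^{**}` -/
  ddualUnit : ∀ A : T, A ⟶ ddual A
  locallyFree_isSheaf : ∀ A, IsLocallyFree A → IsSheaf A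
  locallyFree_isTorsionFree : ∀ A, IsLocallyFree A → IsTorsionFree A
  torsionFree_isSheaf : ∀ A, IsTorsionFree A → IsSheaf A
  sky_isSheaf : ∀ x, IsSheaf (sky x)
  sky_simple : ∀ x, finrank ℂ (sky x ⟶ sky x) = 1
  sky_orthogonal : ∀ x y, x ≠ y → ∀ (i : ℤ) (f : sky x ⟶ (sky y)⟦i⟧), f = 0
  hom_vanish_neg : ∀ A B, IsSheaf A → IsSheaf B →
    ∀ i : ℤ, i < 0 → ∀ f : A ⟶ B⟦i⟧, f = 0
  hom_vanish_big : ∀ A B, IsSheaf A → IsSheaf B →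
    ∀ i : ℤ, (d : ℤ) < i → ∀ f : A ⟶ B⟦i⟧, f = 0
  locallyFree_iff_singSet_empty : ∀ A, IsSheaf A → (IsLocallyFree A ↔ singSet A = ∅)
  hom_sky_rank : ∀ (A : T) (x : Pt), IsLocallyFree A → finrank ℂ (A ⟶ sky x) = rank A

variable {T}

/-!
Since `End(E) = ℂ`, every matrix entry of a morphism `⨁ E ⟶ ⨁ E` is a scalar, so composing
it with `ev` gives on each summand a linear combination of the basis vectors `b j`; linear
independence forces all entries, hence the morphism, to vanish.
-/

section Linear

variable {K : Type*} [Field K] {C : Type u} [Category.{v} C] [Preadditive C] [Linear K C]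

theorem exists_eq_smul_id_of_finrank_end_eq_one {E : C} (h : finrank K (E ⟶ E) = 1)
    (f : E ⟶ E) : ∃ c : K, f = c • 𝟙 E := by
  have hid : 𝟙 E ≠ 0 := fun h0 => by
    have : Subsingleton (E ⟶ E) :=
      ⟨fun f g => by rw [← Category.comp_id f, ← Category.comp_id g, h0, comp_zero, comp_zero]⟩
    simp [finrank_zero_of_subsingleton] at h
  obtain ⟨c, hc⟩ := (finrank_eq_one_iff_of_nonzero' (𝟙 E) hid).mp h f
  exact ⟨c, hc.symm⟩

variable [HasFiniteBiproducts C] {E S : C} {J : Type} [Finite J] {b : J → (E ⟶ S)}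

theorem eq_zero_of_comp_biproduct_desc_eq_zero (hE : ∀ f : E ⟶ E, ∃ c : K, f = c • 𝟙 E)
    (hb : LinearIndependent K b) (f : E ⟶ ⨁ fun _ : J => E)
    (hf : f ≫ biproduct.desc b = 0) : f = 0 := by
  have := Fintype.ofFinite J
  choose c hc using fun j => hE (f ≫ biproduct.π _ j)
  have hsum : ∑ j, c j • b j = 0 := by
    rw [← hf, biproduct.desc_eq, Preadditive.comp_sum]
    refine Finset.sum_congr rfl fun j _ => ?_
    rw [← Category.assoc, hc j, Linear.smul_comp, Category.id_comp]
  have hc0 : ∀ j, c j = 0 := fun j =>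
    linearIndependent_iff'.mp hb Finset.univ c hsum j (Finset.mem_univ j)
  exact biproduct.hom_ext _ _ fun j => by simp [hc j, hc0 j]

theorem biproduct_comp_desc_injective (hE : ∀ f : E ⟶ E, ∃ c : K, f = c • 𝟙 E)
    (hb : LinearIndependent K b) {I : Type} [Finite I] :
    Function.Injective fun g : (⨁ fun _ : I => E) ⟶ ⨁ fun _ : J => E =>
      g ≫ biproduct.desc b := by
  refine (injective_iff_map_eq_zero (Preadditive.rightComp _ (biproduct.desc b))).mpr
    fun g hg => biproduct.hom_ext' _ _ fun i => ?_
  rw [comp_zero]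
  refine eq_zero_of_comp_biproduct_desc_eq_zero hE hb _ ?_
  rw [Category.assoc]
  exact (congrArg _ hg).trans comp_zero

end Linear

theorem comp_evaluation_injective_general
    (d : ℕ) (G : VarietyGeometry T d)
    (E : T) (hsimple : finrank ℂ (E ⟶ E) = 1)
    (x : G.Pt) (b : Basis (Fin (finrank ℂ (E ⟶ G.sky x))) ℂ (E ⟶ G.sky x)) :
    Function.Injective
      (fun g : (⨁ fun _ : Fin (finrank ℂ (E ⟶ G.sky x)) => E) ⟶
          (⨁ fun _ : Fin (finrank ℂ (E ⟶ G.sky x)) => E) =>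
        g ≫ biproduct.desc fun j => b j) :=
  biproduct_comp_desc_injective (exists_eq_smul_id_of_finrank_end_eq_one hsimple)
    b.linearIndependent

/-- Let `E` be a simple vector bundle on a smooth complex
projective variety `X` and `x` a closed point of `X`.  Writing
`E_H = E ⊗_ℂ Hom(E, 𝒪ₓ)` (exhibited as the biproduct of `dim Hom(E, 𝒪ₓ)` copies
of `E` via a basis `b` of `Hom(E, 𝒪ₓ)`) and `ev : E_H → 𝒪ₓ` for the canonical
evaluation map, the map `Hom(E_H, E_H) → Hom(E_H, 𝒪ₓ)` given by composition with
`ev` is injective. -/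
theorem comp_evaluation_injective
    [HomFiniteBounded T] (d : ℕ) (G : VarietyGeometry T d)
    (E : T) (hE : G.IsLocallyFree E) (hsimple : finrank ℂ (E ⟶ E) = 1)
    (x : G.Pt) (b : Basis (Fin (finrank ℂ (E ⟶ G.sky x))) ℂ (E ⟶ G.sky x)) :
    Function.Injective
      (fun g : (⨁ fun _ : Fin (finrank ℂ (E ⟶ G.sky x)) => E) ⟶
          (⨁ fun _ : Fin (finrank ℂ (E ⟶ G.sky x)) => E) =>
        g ≫ biproduct.desc fun j => b j) :=
  comp_evaluation_injective_general d G E hsimple x b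

end SphericalPaper
end
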